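/- Let f ∈ D[t;δ] be monic of degree m ≥ 2. Then f is right semi-invariant if and only if D ⊆ Nuc_r(S_f). -/

import Mathlib

open Finsupp

section Defs

variable {D R : Type*}

/-- `δ` is a derivation on the (possibly noncommutative) ring `D`. -/
def IsDeriv [Ring D] (δ : D → D) : Prop :=
  (∀ a b, δ (a + b) = δ a + δ b) ∧ ∀ a b, δ (a * b) = a * δ b + δ a * b

/-- `(R, i, t, coeff)` realizes the differential polynomial ring `D[t;δ]`:
`t * a = a * t + δ a` for `a ∈ D`, and every element of `R` is uniquely of
the form `∑ aₙ tⁿ`, the `aₙ` being recorded by the additive equivalence `coeff`. -/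
def IsDiffPolyRing [Ring D] [Ring R] (δ : D → D) (i : D →+* R) (t : R)
    (coeff : R ≃+ (ℕ →₀ D)) : Prop :=
  (∀ a : D, t * i a = i a * t + i (δ a)) ∧
    ∀ (n : ℕ) (a : D), coeff.symm (Finsupp.single n a) = i a * t ^ n

/-- `r` has degree `< m`. -/
def DegLt [Ring D] [Ring R] (coeff : R ≃+ (ℕ →₀ D)) (m : ℕ) (r : R) : Prop :=
  ∀ n, m ≤ n → coeff r n = 0

/-- `f` is monic of degree `m`. -/
def MonicDeg [Ring D] [Ring R] (coeff : R ≃+ (ℕ →₀ D)) (m : ℕ) (f : R) : Prop :=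
  coeff f m = 1 ∧ ∀ n, m < n → coeff f n = 0

/-- The carrier of the Petit algebra `S_f`: all polynomials of degree `< m`. -/
def SfSet [Ring D] [Ring R] (coeff : R ≃+ (ℕ →₀ D)) (m : ℕ) : Set R :=
  {r | DegLt coeff m r}

/-- `mul` is the Petit multiplication: `mul x y = x·y mod_r f`, i.e. `mul x y`
has degree `< m` and differs from `x·y` by a left multiple of `f`. -/
def IsPetitMul [Ring D] [Ring R] (coeff : R ≃+ (ℕ →₀ D)) (f : R) (m : ℕ)
    (mul : R → R → R) : Prop :=
  ∀ x y : R, DegLt coeff m (mul x y) ∧ ∃ q : R, x * y = q * f + mul x y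

/-- `f` is right semi-invariant: `f·a ∈ D·f` for all `a ∈ D`. -/
def RightSemiInvariant [Ring D] [Ring R] (i : D →+* R) (f : R) : Prop :=
  ∀ a : D, ∃ b : D, f * i a = i b * f

/-- `f` is two-sided (invariant): the left ideal `Rf` is a two-sided ideal. -/
def TwoSidedElem [Ring R] (f : R) : Prop :=
  ∀ r : R, ∃ q : R, f * r = q * f

/-- `f` (of degree `m`) is irreducible: it has no factorization into factors
of degree `< m`. -/
def IrredDeg [Ring D] [Ring R] (coeff : R ≃+ (ℕ →₀ D)) (m : ℕ) (f : R) : Prop :=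
  ¬∃ g h : R, f = g * h ∧ DegLt coeff m g ∧ DegLt coeff m h

/-- `f` (of degree `m`) is irreducible as a polynomial with coefficients in
the subfield `Fset` of `D`. -/
def IrredOver [Ring D] [Ring R] (coeff : R ≃+ (ℕ →₀ D)) (Fset : Set D) (m : ℕ)
    (f : R) : Prop :=
  ¬∃ g h : R, f = g * h ∧ DegLt coeff m g ∧ DegLt coeff m h ∧
    (∀ n, coeff g n ∈ Fset) ∧ ∀ n, coeff h n ∈ Fset

/-- Left nucleus of the algebra `(S, mul)`. -/
def LeftNuc [Ring R] (S : Set R) (mul : R → R → R) : Set R :=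
  {x ∈ S | ∀ y ∈ S, ∀ z ∈ S, mul (mul x y) z = mul x (mul y z)}

/-- Middle nucleus of the algebra `(S, mul)`. -/
def MidNuc [Ring R] (S : Set R) (mul : R → R → R) : Set R :=
  {x ∈ S | ∀ y ∈ S, ∀ z ∈ S, mul (mul y x) z = mul y (mul x z)}

/-- Right nucleus of the algebra `(S, mul)`. -/
def RightNuc [Ring R] (S : Set R) (mul : R → R → R) : Set R :=
  {x ∈ S | ∀ y ∈ S, ∀ z ∈ S, mul (mul y z) x = mul y (mul z x)}

/-- `(S, mul)` is a division algebra: all nonzero left and right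
multiplications are bijective. -/
def IsDivAlg [Ring R] (S : Set R) (mul : R → R → R) : Prop :=
  ∀ x ∈ S, x ≠ 0 → Set.BijOn (mul x) S S ∧ Set.BijOn (fun y => mul y x) S S

/-- `(S, mul)` is associative. -/
def IsAssocOn [Ring R] (S : Set R) (mul : R → R → R) : Prop :=
  ∀ x ∈ S, ∀ y ∈ S, ∀ z ∈ S, mul (mul x y) z = mul x (mul y z)

/-- The constants of `δ`. -/
def ConstSet [Ring D] (δ : D → D) : Set D := {a | δ a = 0}

/-- The center of `D`. -/
def CenterSet (D : Type*) [Ring D] : Set D := {a | ∀ b, a * b = b * a}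

/-- `F₀ = Const(δ) ∩ C(D)`. -/
def F0Set [Ring D] (δ : D → D) : Set D := ConstSet δ ∩ CenterSet D

/-- The elements of the Petit algebra all of whose coefficients lie in `Fset`,
e.g. `Fset ⊕ Fset·t ⊕ ⋯ ⊕ Fset·t^{m-1}`. -/
def SubCoeffSet [Ring D] [Ring R] (coeff : R ≃+ (ℕ →₀ D)) (m : ℕ)
    (Fset : Set D) : Set R :=
  {r | DegLt coeff m r ∧ ∀ n, coeff r n ∈ Fset}

/-- `S ⊆ R` has dimension `k` over the subfield `Fset ⊆ D` (acting through `i`):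
there is an `Fset`-basis of size `k`. -/
def HasDim [Ring D] [Ring R] (Fset : Set D) (i : D →+* R) (S : Set R) (k : ℕ) : Prop :=
  ∃ b : Fin k → R, (∀ j, b j ∈ S) ∧
    ∀ x ∈ S, ∃! c : Fin k → D, (∀ j, c j ∈ Fset) ∧ x = ∑ j, i (c j) * b j

/-- `S ⊆ D` has dimension `k` over the subfield `Fset ⊆ D`. -/
def HasDimIn [Ring D] (Fset : Set D) (S : Set D) (k : ℕ) : Prop :=
  ∃ b : Fin k → D, (∀ j, b j ∈ S) ∧
    ∀ x ∈ S, ∃! c : Fin k → D, (∀ j, c j ∈ Fset) ∧ x = ∑ j, c j * b j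

/-- Substitution of `x` for `t` in `r = ∑ aₙ tⁿ`. -/
noncomputable def substT [Ring D] [Ring R] (coeff : R ≃+ (ℕ →₀ D)) (i : D →+* R) (r x : R) : R :=
  (coeff r).sum fun n c => i c * x ^ n

/-- `V_f(b)`: the constant `f(t) − f(t−b)`. -/
noncomputable def Vf [Ring D] [Ring R] (coeff : R ≃+ (ℕ →₀ D)) (i : D →+* R) (t f : R) (b : D) : D :=
  coeff (f - substT coeff i f (t - i b)) 0

/-- `V_p(b)`: the constant with `(t−b)^p = t^p − V_p(b)`. -/
noncomputable def Vp [Ring D] [Ring R] (coeff : R ≃+ (ℕ →₀ D)) (i : D →+* R) (t : R) (p : ℕ)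
    (b : D) : D :=
  coeff (t ^ p - (t - i b) ^ p) 0

/-- For commutative coefficients, `V_p(b) = b^p + δ^{p−1}(b)`. -/
def VpFun [Ring D] (δ : D → D) (p : ℕ) : D → D := fun b => b ^ p + δ^[p - 1] b

/-- `V(a) = V_{p^e}(a) + c₁ V_{p^{e−1}}(a) + ⋯ + c_e a`, computed with
`V_p(b) = b^p + δ^{p−1}(b)` (commutative case). -/
def Vg [Ring D] (δ : D → D) (p e : ℕ) (c : Fin e → D) : D → D :=
  fun a => (VpFun δ p)^[e] a + ∑ j : Fin e, c j * (VpFun δ p)^[e - 1 - (j : ℕ)] a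

/-- `V(a) = V_{p^e}(a) + c₁ V_{p^{e−1}}(a) + ⋯ + c_e a`, with `V_p` defined by
the identity `(t−b)^p = t^p − V_p(b)` in `D[t;δ]`. -/
noncomputable def VgR [Ring D] [Ring R] (coeff : R ≃+ (ℕ →₀ D)) (i : D →+* R) (t : R) (p e : ℕ)
    (c : Fin e → D) : D → D :=
  fun a => (Vp coeff i t p)^[e] a + ∑ j : Fin e, c j * (Vp coeff i t p)^[e - 1 - (j : ℕ)] a

/-- The map `G_{id,−a}` sending `∑ bₙ tⁿ` to `∑ bₙ (t−a)ⁿ`. -/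
noncomputable def Gmap [Ring D] [Ring R] (coeff : R ≃+ (ℕ →₀ D)) (i : D →+* R) (t : R) (a : D) :
    R → R :=
  fun r => substT coeff i r (t - i a)

/-- `H` is an isomorphism of `Fset`-algebras from `(S, mul)` onto `(S', mul')`. -/
def IsAlgIso [Ring D] [Ring R] (Fset : Set D) (i : D →+* R) (S S' : Set R)
    (mul mul' : R → R → R) (H : R → R) : Prop :=
  Set.BijOn H S S' ∧ (∀ x ∈ S, ∀ y ∈ S, H (x + y) = H x + H y) ∧
    (∀ x ∈ S, ∀ y ∈ S, H (mul x y) = mul' (H x) (H y)) ∧ H 1 = 1 ∧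
    ∀ a ∈ Fset, ∀ x ∈ S, H (i a * x) = i a * H x

/-- `H` is an `Fset`-algebra automorphism of the Petit algebra `(S, mul)`. -/
def IsAut [Ring D] [Ring R] (Fset : Set D) (i : D →+* R) (S : Set R)
    (mul : R → R → R) (H : R → R) : Prop :=
  IsAlgIso Fset i S S mul mul H

/-- The operator `δ^{p^e} + c₁ δ^{p^{e−1}} + ⋯ + c_e δ` vanishes on `Cset`,
i.e. the `p`-polynomial `t^{p^e} + c₁ t^{p^{e−1}} + ⋯ + c_e t` annihilates `δ|_{Cset}`. -/
def PPolyAnnOn [Ring D] (δ : D → D) (Cset : Set D) (p e : ℕ) (c : Fin e → D) : Prop :=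
  ∀ a ∈ Cset, δ^[p ^ e] a + ∑ j : Fin e, c j * δ^[p ^ (e - 1 - (j : ℕ))] a = 0

/-- `t^{p^e} + c₁ t^{p^{e−1}} + ⋯ + c_e t` (coefficients in `Fset`) is the minimum
`p`-polynomial of `δ` restricted to `Cset`. -/
def IsMinPPoly [Ring D] (δ : D → D) (Cset Fset : Set D) (p e : ℕ)
    (c : Fin e → D) : Prop :=
  (∀ j, c j ∈ Fset) ∧ PPolyAnnOn δ Cset p e c ∧
    ∀ e' : ℕ, e' < e → ∀ c' : Fin e' → D, (∀ j, c' j ∈ Fset) →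
      ¬PPolyAnnOn δ Cset p e' c'

/-- The natural map from `D[X]` to `R`, `∑ aₙ Xⁿ ↦ ∑ aₙ tⁿ`. -/
noncomputable def polyToR [Ring D] [Ring R] (i : D →+* R) (t : R) (q : Polynomial D) : R :=
  q.sum fun n a => i a * t ^ n

/-- The element `f ∈ R` rewritten as an ordinary polynomial in `D[X]`. -/
noncomputable def coeffPoly [Ring D] [Ring R] (coeff : R ≃+ (ℕ →₀ D)) (f : R) : Polynomial D :=
  (coeff f).sum fun n a => Polynomial.C a * Polynomial.X ^ n

/-- The set `T = Fset ⊕ Fset·t ⊕ ⋯ ⊕ Fset·t^{m−1} ⊆ S_f` is isomorphic, as a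
ring, to the quotient `Fset[X]/(f)`: the natural map `θ : ∑ aₙ Xⁿ ↦ ∑ aₙ tⁿ`,
from polynomials over `Fset` of degree `< m` with multiplication given by
reduction mod `f`, is a bijection onto `T` respecting all the operations. -/
def IsPolyQuotIso [Ring D] [Ring R] (Fset : Set D) (i : D →+* R)
    (coeff : R ≃+ (ℕ →₀ D)) (t f : R) (m : ℕ) (mul : R → R → R) (T : Set R) : Prop :=
  Set.BijOn (polyToR i t)
    {q : Polynomial D | (∀ n, q.coeff n ∈ Fset) ∧ q.degree < (m : WithBot ℕ)} T ∧
  (∀ q q' : Polynomial D, polyToR i t (q + q') = polyToR i t q + polyToR i t q') ∧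
  polyToR i t 1 = 1 ∧
  ∀ q ∈ {q : Polynomial D | (∀ n, q.coeff n ∈ Fset) ∧ q.degree < (m : WithBot ℕ)},
    ∀ q' ∈ {q : Polynomial D | (∀ n, q.coeff n ∈ Fset) ∧ q.degree < (m : WithBot ℕ)},
      ∃ s r : Polynomial D, q * q' = s * coeffPoly coeff f + r ∧
        r.degree < (m : WithBot ℕ) ∧
        polyToR i t r = mul (polyToR i t q) (polyToR i t q')

end Defs

/-! Multiplying on the right by a constant `a ∈ D` never raises degrees, so `z ∘ a = z a`
in `S_f`. If `f a = b f`, then `(y z) a` and `y (z a)` differ by a left multiple of `f`, which gives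
`[y, z, a] = 0`. Conversely, the associator at `(t^{m-1}, t, a)` equals `f a mod_r f`, so
`D ⊆ Nuc_r(S_f)` forces `f a = q f`; comparing degrees, `q ∈ D`. -/

section DegLt

variable {D R : Type*} [Ring D] [Ring R] {coeff : R ≃+ (ℕ →₀ D)} {m n : ℕ} {x y : R}

theorem DegLt.mono (hx : DegLt coeff m x) (h : m ≤ n) : DegLt coeff n x :=
  fun k hk => hx k (h.trans hk)

theorem DegLt.add (hx : DegLt coeff m x) (hy : DegLt coeff m y) : DegLt coeff m (x + y) :=
  fun k hk => by rw [map_add, Finsupp.add_apply, hx k hk, hy k hk, add_zero]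

theorem DegLt.sub (hx : DegLt coeff m x) (hy : DegLt coeff m y) : DegLt coeff m (x - y) :=
  fun k hk => by rw [map_sub, Finsupp.sub_apply, hx k hk, hy k hk, sub_zero]

theorem eq_zero_of_degLt_zero (hx : DegLt coeff 0 x) : x = 0 := by
  have h : coeff x = 0 := Finsupp.ext fun k => hx k k.zero_le
  rwa [map_eq_zero_iff coeff coeff.injective] at h

theorem exists_degLt_succ_coeff_ne_zero (h : coeff x n ≠ 0) :
    ∃ d, n ≤ d ∧ coeff x d ≠ 0 ∧ DegLt coeff (d + 1) x := by
  have hn : n ∈ (coeff x).support := Finsupp.mem_support_iff.2 h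
  refine ⟨(coeff x).support.max' ⟨n, hn⟩, (coeff x).support.le_max' n hn,
    Finsupp.mem_support_iff.1 ((coeff x).support.max'_mem _), fun k hk => ?_⟩
  by_contra hk0
  have := (coeff x).support.le_max' k (Finsupp.mem_support_iff.2 hk0)
  omega

theorem IsDeriv.map_zero {δ : D → D} (hδ : IsDeriv δ) : δ 0 = 0 :=
  _root_.map_zero (AddMonoidHom.mk' δ hδ.1)

theorem MonicDeg.degLt_succ {f : R} (hf : MonicDeg coeff m f) : DegLt coeff (m + 1) f :=
  hf.2

end DegLt

namespace IsDiffPolyRing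

variable {D R : Type*} [Ring D] [Ring R] {δ : D → D} {i : D →+* R} {t : R}
  {coeff : R ≃+ (ℕ →₀ D)} {m : ℕ}

theorem coeff_C_mul_T_pow (hR : IsDiffPolyRing δ i t coeff) (a : D) (n : ℕ) :
    coeff (i a * t ^ n) = Finsupp.single n a := by
  rw [← hR.2 n a, AddEquiv.apply_symm_apply]

theorem coeff_C (hR : IsDiffPolyRing δ i t coeff) (a : D) :
    coeff (i a) = Finsupp.single 0 a := by
  simpa using hR.coeff_C_mul_T_pow a 0

theorem coeff_T_pow (hR : IsDiffPolyRing δ i t coeff) (n : ℕ) :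
    coeff (t ^ n) = Finsupp.single n 1 := by
  simpa using hR.coeff_C_mul_T_pow 1 n

theorem degLt_C (hR : IsDiffPolyRing δ i t coeff) (a : D) : DegLt coeff 1 (i a) :=
  fun k hk => by rw [hR.coeff_C, Finsupp.single_eq_of_ne (by omega)]

theorem degLt_T_pow (hR : IsDiffPolyRing δ i t coeff) {k : ℕ} (h : k < m) :
    DegLt coeff m (t ^ k) :=
  fun n hn => by rw [hR.coeff_T_pow, Finsupp.single_eq_of_ne (by omega)]

theorem addHom_ext (hR : IsDiffPolyRing δ i t coeff) {M : Type*} [AddCommMonoid M]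
    {φ ψ : R →+ M} (h : ∀ n a, φ (i a * t ^ n) = ψ (i a * t ^ n)) : φ = ψ := by
  have hcomp : φ.comp coeff.symm.toAddMonoidHom = ψ.comp coeff.symm.toAddMonoidHom :=
    Finsupp.addHom_ext fun n a => by simpa [hR.2] using h n a
  ext x
  simpa using DFunLike.congr_fun hcomp (coeff x)

theorem eq_sum_range (hR : IsDiffPolyRing δ i t coeff) {x : R} (hx : DegLt coeff m x) :
    x = ∑ k ∈ Finset.range m, i (coeff x k) * t ^ k := by
  have hsum : ((coeff x).sum fun k a => i a * t ^ k) = x := by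
    conv_rhs => rw [← coeff.symm_apply_apply x, ← (coeff x).sum_single]
    rw [map_finsuppSum]
    exact Finsupp.sum_congr fun k _ => (hR.2 k _).symm
  have hsupp : (coeff x).support ⊆ Finset.range m := fun k hk => by
    by_contra hkm
    exact Finsupp.mem_support_iff.1 hk (hx k (by simpa using hkm))
  conv_lhs => rw [← hsum]
  exact Finsupp.sum_of_support_subset _ hsupp _ fun k _ => by simp

theorem eq_C_of_degLt_one (hR : IsDiffPolyRing δ i t coeff) {q : R} (hq : DegLt coeff 1 q) :
    q = i (coeff q 0) := by
  simpa using hR.eq_sum_range hq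

theorem coeff_C_mul (hR : IsDiffPolyRing δ i t coeff) (a : D) (x : R) (n : ℕ) :
    coeff (i a * x) n = a * coeff x n := by
  let φ : R →+ D :=
    (Finsupp.applyAddHom n).comp (coeff.toAddMonoidHom.comp (AddMonoidHom.mulLeft (i a)))
  let ψ : R →+ D :=
    (AddMonoidHom.mulLeft a).comp ((Finsupp.applyAddHom n).comp coeff.toAddMonoidHom)
  have hφψ : φ = ψ := hR.addHom_ext fun k b => by
    simp only [φ, ψ, AddMonoidHom.comp_apply, AddMonoidHom.coe_mulLeft,
      AddEquiv.coe_toAddMonoidHom, Finsupp.applyAddHom_apply, ← mul_assoc, ← map_mul,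
      hR.coeff_C_mul_T_pow, Finsupp.single_apply]
    split_ifs <;> simp
  exact DFunLike.congr_fun hφψ x

theorem coeff_T_mul_succ (hδ : IsDeriv δ) (hR : IsDiffPolyRing δ i t coeff) (y : R) (n : ℕ) :
    coeff (t * y) (n + 1) = coeff y n + δ (coeff y (n + 1)) := by
  let δ' : D →+ D := AddMonoidHom.mk' δ hδ.1
  let φ : R →+ D :=
    (Finsupp.applyAddHom (n + 1)).comp (coeff.toAddMonoidHom.comp (AddMonoidHom.mulLeft t))
  let ψ : R →+ D := (Finsupp.applyAddHom n).comp coeff.toAddMonoidHom +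
    δ'.comp ((Finsupp.applyAddHom (n + 1)).comp coeff.toAddMonoidHom)
  have hmono : ∀ k a, t * (i a * t ^ k) = i a * t ^ (k + 1) + i (δ a) * t ^ k := fun k a => by
    rw [← mul_assoc, hR.1, add_mul, mul_assoc, ← pow_succ']
  have hφψ : φ = ψ := hR.addHom_ext fun k a => by
    have hδ0 := hδ.map_zero
    simp only [φ, ψ, δ', AddMonoidHom.add_apply, AddMonoidHom.comp_apply,
      AddMonoidHom.coe_mulLeft, AddEquiv.coe_toAddMonoidHom, Finsupp.applyAddHom_apply,
      AddMonoidHom.mk'_apply, hmono, map_add, hR.coeff_C_mul_T_pow, Finsupp.single_apply]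
    split_ifs <;> simp_all
  exact DFunLike.congr_fun hφψ y

theorem coeff_T_pow_mul (hδ : IsDeriv δ) (hR : IsDiffPolyRing δ i t coeff) {y : R} {e : ℕ}
    (hy : DegLt coeff (e + 1) y) (k : ℕ) {n : ℕ} (hn : e ≤ n) :
    coeff (t ^ k * y) (n + k) = coeff y n := by
  induction k generalizing n with
  | zero => simp
  | succ k ih =>
    rw [pow_succ', mul_assoc, ← add_assoc, hR.coeff_T_mul_succ hδ, ih hn, add_right_comm,
      ih (by omega), hy (n + 1) (by omega), hδ.map_zero, add_zero]

theorem coeff_mul_of_le (hδ : IsDeriv δ) (hR : IsDiffPolyRing δ i t coeff) {x y : R}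
    {d e n : ℕ} (hx : DegLt coeff (d + 1) x) (hy : DegLt coeff (e + 1) y) (hn : d + e ≤ n) :
    coeff (x * y) n = ∑ k ∈ Finset.range (d + 1), coeff x k * coeff y (n - k) := by
  conv_lhs => rw [hR.eq_sum_range hx]
  rw [Finset.sum_mul, map_sum, Finsupp.finsetSum_apply]
  refine Finset.sum_congr rfl fun k hk => ?_
  have hkd : k ≤ d := Nat.lt_succ_iff.1 (Finset.mem_range.1 hk)
  rw [mul_assoc, hR.coeff_C_mul, ← hR.coeff_T_pow_mul hδ hy k (n := n - k) (by omega),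
    Nat.sub_add_cancel (by omega)]

theorem coeff_mul_add (hδ : IsDeriv δ) (hR : IsDiffPolyRing δ i t coeff) {x y : R} {d e : ℕ}
    (hx : DegLt coeff (d + 1) x) (hy : DegLt coeff (e + 1) y) :
    coeff (x * y) (d + e) = coeff x d * coeff y e := by
  rw [hR.coeff_mul_of_le hδ hx hy le_rfl, Finset.sum_range_succ, Nat.add_sub_cancel_left,
    Finset.sum_eq_zero, zero_add]
  intro k hk
  rw [hy _ (by simp at hk; omega), mul_zero]

theorem degLt_mul (hδ : IsDeriv δ) (hR : IsDiffPolyRing δ i t coeff) {x y : R} {e : ℕ}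
    (hx : DegLt coeff m x) (hy : DegLt coeff (e + 1) y) : DegLt coeff (m + e) (x * y) := by
  rcases m with _ | d
  · rw [eq_zero_of_degLt_zero hx, zero_mul]
    exact fun k _ => by simp
  intro n hn
  rw [hR.coeff_mul_of_le hδ hx hy (by omega)]
  exact Finset.sum_eq_zero fun k hk => by
    rw [hy _ (by simp at hk; omega), mul_zero]

theorem degLt_mul_C (hδ : IsDeriv δ) (hR : IsDiffPolyRing δ i t coeff) {x : R}
    (hx : DegLt coeff m x) (a : D) : DegLt coeff m (x * i a) :=
  hR.degLt_mul hδ hx (hR.degLt_C a)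

theorem degLt_of_degLt_mul_monic (hδ : IsDeriv δ) (hR : IsDiffPolyRing δ i t coeff) {f q : R}
    {k : ℕ} (hf : MonicDeg coeff m f) (h : DegLt coeff (k + m) (q * f)) : DegLt coeff k q := by
  intro n hn
  by_contra hqn
  obtain ⟨d, hnd, hqd, hq⟩ := exists_degLt_succ_coeff_ne_zero hqn
  have hlead := hR.coeff_mul_add hδ hq hf.degLt_succ
  rw [hf.1, mul_one] at hlead
  exact hqd (hlead ▸ h (d + m) (by omega))

end IsDiffPolyRing

section PetitAlgebra

variable {D R : Type*} [Ring D] [Ring R] {δ : D → D} {i : D →+* R} {t : R}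
  {coeff : R ≃+ (ℕ →₀ D)} {f : R} {m : ℕ} {mulS : R → R → R}

theorem petitMul_eq (hδ : IsDeriv δ) (hR : IsDiffPolyRing δ i t coeff) (hf : MonicDeg coeff m f)
    (hmulS : IsPetitMul coeff f m mulS) {x y q r : R} (h : x * y = q * f + r)
    (hr : DegLt coeff m r) : mulS x y = r := by
  obtain ⟨hdeg, q', h'⟩ := hmulS x y
  have hdiff : (q - q') * f = mulS x y - r := by
    rw [sub_mul, sub_eq_sub_iff_add_eq_add, ← h, h', add_comm]
  have hq : q - q' = 0 := eq_zero_of_degLt_zero <|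
    hR.degLt_of_degLt_mul_monic hδ hf (by rw [zero_add, hdiff]; exact hdeg.sub hr)
  rw [hq, zero_mul] at hdiff
  exact sub_eq_zero.1 hdiff.symm

theorem petitMul_eq_mul (hδ : IsDeriv δ) (hR : IsDiffPolyRing δ i t coeff)
    (hf : MonicDeg coeff m f) (hmulS : IsPetitMul coeff f m mulS) {x y : R}
    (h : DegLt coeff m (x * y)) : mulS x y = x * y :=
  petitMul_eq hδ hR hf hmulS (q := 0) (by rw [zero_mul, zero_add]) h

theorem RightSemiInvariant.petitMul_assoc_C (hδ : IsDeriv δ) (hR : IsDiffPolyRing δ i t coeff)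
    (hf : MonicDeg coeff m f) (hmulS : IsPetitMul coeff f m mulS)
    (hsi : RightSemiInvariant i f) (a : D) (y : R) {z : R} (hz : DegLt coeff m z) :
    mulS (mulS y z) (i a) = mulS y (mulS z (i a)) := by
  obtain ⟨hw, q, hq⟩ := hmulS y z
  obtain ⟨b, hb⟩ := hsi a
  rw [petitMul_eq_mul hδ hR hf hmulS (hR.degLt_mul_C hδ hz a),
    petitMul_eq_mul hδ hR hf hmulS (hR.degLt_mul_C hδ hw a)]
  refine (petitMul_eq hδ hR hf hmulS (q := q * i b) ?_ (hR.degLt_mul_C hδ hw a)).symm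
  rw [← mul_assoc, hq, add_mul, mul_assoc, hb, ← mul_assoc]

theorem rightSemiInvariant_of_petitMul_assoc (hδ : IsDeriv δ) (hR : IsDiffPolyRing δ i t coeff)
    (hf : MonicDeg coeff m f) (hmulS : IsPetitMul coeff f m mulS) (hm : 2 ≤ m)
    (h : ∀ a, mulS (mulS (t ^ (m - 1)) t) (i a) = mulS (t ^ (m - 1)) (mulS t (i a))) :
    RightSemiInvariant i f := by
  intro a
  set g := t ^ m - f
  have hg : DegLt coeff m g := fun n hn => by
    rw [map_sub, Finsupp.sub_apply, hR.coeff_T_pow]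
    rcases hn.eq_or_lt with rfl | hlt
    · rw [Finsupp.single_eq_same, hf.1, sub_self]
    · rw [Finsupp.single_eq_of_ne (by omega), hf.2 n hlt, sub_zero]
  have htt : t ^ (m - 1) * t = t ^ m := by rw [← pow_succ, Nat.sub_add_cancel (by omega)]
  obtain ⟨hr, q, hq⟩ := hmulS f (i a)
  have hpowT : mulS (t ^ (m - 1)) t = g :=
    petitMul_eq hδ hR hf hmulS (q := 1) (by rw [htt, one_mul, add_sub_cancel]) hg
  have hTC : mulS t (i a) = t * i a := petitMul_eq_mul hδ hR hf hmulS <| by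
    simpa using (hR.degLt_mul_C hδ (hR.degLt_T_pow (k := 1) hm) a)
  have hpowTC : mulS (t ^ (m - 1)) (t * i a) = mulS f (i a) + g * i a := by
    refine petitMul_eq hδ hR hf hmulS (q := q) ?_ (hr.add (hR.degLt_mul_C hδ hg a))
    calc t ^ (m - 1) * (t * i a) = f * i a + g * i a := by
          rw [← mul_assoc, htt, ← add_mul, add_sub_cancel]
      _ = q * f + (mulS f (i a) + g * i a) := by rw [hq, add_assoc]
  have hr0 : mulS f (i a) = 0 := by
    have hassoc := h a
    rw [hpowT, hTC, hpowTC, petitMul_eq_mul hδ hR hf hmulS (hR.degLt_mul_C hδ hg a)] at hassoc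
    simpa using hassoc.symm
  rw [hr0, add_zero] at hq
  have hq1 : DegLt coeff 1 q := hR.degLt_of_degLt_mul_monic hδ hf <| by
    rw [← hq, add_comm]
    exact hR.degLt_mul_C hδ hf.degLt_succ a
  exact ⟨coeff q 0, by rw [hq, ← hR.eq_C_of_degLt_one hq1]⟩

end PetitAlgebra

theorem stmt_1_general {D R : Type*} [DivisionRing D] [Ring R]
    (δ : D → D) (hδ : IsDeriv δ)
    (i : D →+* R) (t : R) (coeff : R ≃+ (ℕ →₀ D))
    (hR : IsDiffPolyRing δ i t coeff)
    (f : R) (m : ℕ) (hm : 2 ≤ m) (hf : MonicDeg coeff m f)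
    (mulS : R → R → R) (hmulS : IsPetitMul coeff f m mulS) :
    RightSemiInvariant i f ↔ ∀ a : D, i a ∈ RightNuc (SfSet coeff m) mulS := by
  have hC : ∀ a, i a ∈ SfSet coeff m := fun a => (hR.degLt_C a).mono (by omega)
  have hT : ∀ k, k < m → t ^ k ∈ SfSet coeff m := fun k hk => hR.degLt_T_pow hk
  constructor
  · intro hsi a
    exact ⟨hC a, fun y _ z hz => hsi.petitMul_assoc_C hδ hR hf hmulS a y hz⟩
  · intro hnuc
    refine rightSemiInvariant_of_petitMul_assoc hδ hR hf hmulS hm fun a => ?_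
    simpa using (hnuc a).2 _ (hT (m - 1) (by omega)) (t ^ 1) (hT 1 (by omega))

/-- `f` (monic of degree `m ≥ 2`) is right semi-invariant iff
`D ⊆ Nuc_r(S_f)`. -/
theorem stmt_1 {D R : Type*} [DivisionRing D] [Ring R]
    (δ : D → D) (hδ : IsDeriv δ) (hδ0 : δ ≠ 0)
    (i : D →+* R) (t : R) (coeff : R ≃+ (ℕ →₀ D))
    (hR : IsDiffPolyRing δ i t coeff)
    (f : R) (m : ℕ) (hm : 2 ≤ m) (hf : MonicDeg coeff m f)
    (mulS : R → R → R) (hmulS : IsPetitMul coeff f m mulS) :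
    RightSemiInvariant i f ↔ ∀ a : D, i a ∈ RightNuc (SfSet coeff m) mulS :=
  stmt_1_general δ hδ i t coeff hR f m hm hf mulS hmulS
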